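/- arXiv:math/0301254 — 5 statements merged into one kernel-verified Lean document; each statement's English description precedes it below -/
import Mathlib

section
/- Let n ≥ 3 and u : ℝⁿ → ℝ be continuous and positive. Suppose that for every x ∈ ℝⁿ and every λ > 0, the Kelvin transform inequality (λ/|y−x|)^{n−2} u(x + λ²(y−x)/|y−x|²) ≤ u(y) holds for all y with |y−x| ≥ λ. Then u is constant. -/
/-!
Given `a ≠ b` and `0 < s < 1`, put the center `x` on the line through `a` and `b`, beyond `a`, so
that the inversion in the sphere about `x` of radius `λ = √s ‖b - x‖` sends `b` to `a`. The
hypothesis then reads `(√s) ^ (n - 2) u(a) ≤ u(b)`, and letting `s → 1` (the center escapes to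
infinity) gives `u(a) ≤ u(b)`. By symmetry `u` is constant.
-/

open Filter Topology

section Kelvin

variable {E : Type*} [NormedAddCommGroup E] [NormedSpace ℝ E]

def LiesAboveKelvinTransforms (k : ℕ) (u : E → ℝ) : Prop :=
  ∀ (x : E) (l : ℝ), 0 < l → ∀ y : E, l ≤ ‖y - x‖ →
    (l / ‖y - x‖) ^ k * u (x + (l ^ 2 / ‖y - x‖ ^ 2) • (y - x)) ≤ u y

/-- The case `λ = √s ‖y - x‖` of the hypothesis, in which the inversion is the homothety of
ratio `s` about `x`. -/
theorem LiesAboveKelvinTransforms.sqrt_pow_mul_le {k : ℕ} {u : E → ℝ}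
    (hu : LiesAboveKelvinTransforms k u) {x y : E} (hxy : y ≠ x) {s : ℝ} (hs₀ : 0 < s)
    (hs₁ : s ≤ 1) : √s ^ k * u (x + s • (y - x)) ≤ u y := by
  have hd : 0 < ‖y - x‖ := norm_pos_iff.mpr (sub_ne_zero.mpr hxy)
  have hl : √s * ‖y - x‖ ≤ ‖y - x‖ :=
    mul_le_of_le_one_left hd.le (Real.sqrt_le_one.mpr hs₁)
  have hratio : √s * ‖y - x‖ / ‖y - x‖ = √s := by field_simp
  have hsq : (√s * ‖y - x‖) ^ 2 / ‖y - x‖ ^ 2 = s := by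
    rw [mul_pow, Real.sq_sqrt hs₀.le]; field_simp
  simpa only [hratio, hsq] using hu x _ (by positivity) y hl

theorem LiesAboveKelvinTransforms.le {k : ℕ} {u : E → ℝ}
    (hu : LiesAboveKelvinTransforms k u) (a b : E) : u a ≤ u b := by
  rcases eq_or_ne a b with rfl | hab
  · exact le_rfl
  have hba : b - a ≠ 0 := sub_ne_zero.mpr hab.symm
  have hbound : ∀ s ∈ Set.Ioo (0 : ℝ) 1, √s ^ k * u a ≤ u b := by
    rintro s ⟨hs₀, hs₁⟩
    have h1s : 1 - s ≠ 0 := by linarith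
    set x := b - (1 - s)⁻¹ • (b - a)
    have hbx : b - x = (1 - s)⁻¹ • (b - a) := sub_sub_cancel b _
    have hxb : b ≠ x := sub_ne_zero.mp (hbx ▸ smul_ne_zero (inv_ne_zero h1s) hba)
    have hinv : x + s • (b - x) = a := by
      rw [hbx, smul_smul]
      calc b - (1 - s)⁻¹ • (b - a) + (s * (1 - s)⁻¹) • (b - a)
          = b - ((1 - s) * (1 - s)⁻¹) • (b - a) := by module
        _ = a := by rw [mul_inv_cancel₀ h1s, one_smul, sub_sub_cancel]
    simpa only [hinv] using hu.sqrt_pow_mul_le hxb hs₀ hs₁.le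
  have hlim : Tendsto (fun s : ℝ => √s ^ k * u a) (𝓝[<] 1) (𝓝 (u a)) := by
    have hcont : Continuous fun s : ℝ => √s ^ k * u a := by fun_prop
    simpa using (hcont.tendsto 1).mono_left nhdsWithin_le_nhds
  exact le_of_tendsto hlim (mem_of_superset (Ioo_mem_nhdsLT zero_lt_one) hbound)

end Kelvin

theorem stmt3_general {n : ℕ} (u : EuclideanSpace ℝ (Fin n) → ℝ)
    (h : ∀ (x : EuclideanSpace ℝ (Fin n)) (l : ℝ), 0 < l →
      ∀ y : EuclideanSpace ℝ (Fin n), l ≤ ‖y - x‖ →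
        (l / ‖y - x‖) ^ (n - 2) * u (x + (l ^ 2 / ‖y - x‖ ^ 2) • (y - x)) ≤ u y) :
    ∃ c : ℝ, ∀ x, u x = c := by
  have hu : LiesAboveKelvinTransforms (n - 2) u := h
  exact ⟨u 0, fun x => le_antisymm (hu.le x 0) (hu.le 0 x)⟩

/-- If a positive continuous function on `ℝⁿ` (`n ≥ 3`) lies above all of its
Kelvin transforms `u_{x,λ}` outside the corresponding spheres, for every center
`x` and every radius `λ > 0`, then it is constant. -/
theorem stmt3 {n : ℕ} (hn : 3 ≤ n) (u : EuclideanSpace ℝ (Fin n) → ℝ)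
    (hc : Continuous u) (hpos : ∀ x, 0 < u x)
    (h : ∀ (x : EuclideanSpace ℝ (Fin n)) (l : ℝ), 0 < l →
      ∀ y : EuclideanSpace ℝ (Fin n), l ≤ ‖y - x‖ →
        (l / ‖y - x‖) ^ (n - 2) * u (x + (l ^ 2 / ‖y - x‖ ^ 2) • (y - x)) ≤ u y) :
    ∃ c : ℝ, ∀ x, u x = c :=
  stmt3_general u h
end

section
/- Let n ≥ 3, u : ℝⁿ → ℝ be positive and C¹, and suppose liminf_{|y|→∞} |y|^{n−2} u(y) > 0. Then for every x ∈ ℝⁿ there exists λ₀(x) > 0 such that for all 0 < λ < λ₀(x) and all y with |y−x| ≥ λ, one has (λ/|y−x|)^{n−2} u(x + λ²(y−x)/|y−x|²) ≤ u(y). -/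
/-!
Write `p = n - 2`. Near the centre, `r ↦ r ^ p * u (x + r • θ) ^ 2` (the square of
`r^{p/2} u(x + rθ)`) has derivative `r^{p-1} u (p u + 2 r ∂_θ u)`, which is nonnegative for
`r ≤ r₀` uniformly in the unit direction `θ`, since `u` is bounded below and `Du` bounded near `x`.
The Kelvin transform pairs `y = x + dθ` with `x + (λ²/d) θ`, and `λ²/d ≤ d`, so this monotonicity
gives `u_{x,λ}(y) ≤ u(y)` whenever `λ ≤ |y - x| ≤ r₀`. For `|y - x| ≥ r₀`, the decay hypothesis
and compactness give `|y - x|^p u(y) ≥ c > 0`, whereas `|y - x|^p u_{x,λ}(y) ≤ λ^p max_{B_1(x)} u`,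
which is below `c` once `λ` is small.
-/

open Filter Metric Set Topology

theorem monotoneOn_pow_mul_sq {h h' : ℝ → ℝ} {p : ℕ} {r₀ : ℝ}
    (hh : ∀ r ∈ Icc 0 r₀, HasDerivAt h (h' r) r) (hnn : ∀ r ∈ Ioo 0 r₀, 0 ≤ h r)
    (hkey : ∀ r ∈ Ioo 0 r₀, 0 ≤ p * h r + 2 * r * h' r) :
    MonotoneOn (fun r => r ^ p * h r ^ 2) (Icc 0 r₀) := by
  have hderiv : ∀ r ∈ Icc 0 r₀, HasDerivAt (fun r => r ^ p * h r ^ 2)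
      (p * r ^ (p - 1) * h r ^ 2 + r ^ p * (2 * h r * h' r)) r := fun r hr =>
    ((hasDerivAt_pow p r).fun_mul ((hh r hr).fun_pow 2)).congr_deriv (by norm_num)
  refine monotoneOn_of_hasDerivWithinAt_nonneg (convex_Icc 0 r₀)
    (fun r hr => (hderiv r hr).continuousAt.continuousWithinAt)
    (fun r hr => (hderiv r (interior_subset hr)).hasDerivWithinAt) fun r hr => ?_
  rw [interior_Icc] at hr
  refine nonneg_of_mul_nonneg_right ?_ hr.1
  have hfactor : r * (p * r ^ (p - 1) * h r ^ 2 + r ^ p * (2 * h r * h' r)) =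
      r ^ p * h r * (p * h r + 2 * r * h' r) := by
    rcases p with _ | p
    · simp only [CharP.cast_eq_zero, zero_mul, zero_add, pow_zero]; ring
    · simp only [Nat.add_sub_cancel, pow_succ]; push_cast; ring
  rw [hfactor]
  exact mul_nonneg (mul_nonneg (pow_nonneg hr.1.le p) (hnn r hr)) (hkey r hr)

theorem IsClosed.exists_pos_le_of_eventually_cocompact {X : Type*} [TopologicalSpace X]
    {f : X → ℝ} {s : Set X} (hs : IsClosed s) (hf : ContinuousOn f s)
    (hpos : ∀ y ∈ s, 0 < f y) {c : ℝ} (hc : 0 < c) (hev : ∀ᶠ y in cocompact X, c ≤ f y) :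
    ∃ c' > 0, ∀ y ∈ s, c' ≤ f y := by
  obtain ⟨K, hK, hKc⟩ := mem_cocompact.mp hev
  obtain ⟨c₁, hc₁, hc₁le⟩ := (hK.inter_right hs).exists_forall_le' (hf.mono inter_subset_right)
    fun y hy => hpos y hy.2
  refine ⟨min c c₁, lt_min hc hc₁, fun y hy => ?_⟩
  by_cases hyK : y ∈ K
  · exact (min_le_right _ _).trans (hc₁le y ⟨hyK, hy⟩)
  · exact (min_le_left _ _).trans (hKc hyK)

theorem exists_pos_eventually_le_norm_sub_pow_mul {E : Type*} [NormedAddCommGroup E]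
    [ProperSpace E] {u : E → ℝ} {p : ℕ}
    (hnn : ∀ y, 0 ≤ u y) (hinf : 0 < liminf (fun y => ‖y‖ ^ p * u y) (cocompact E)) (x : E) :
    ∃ c > 0, ∀ᶠ y in cocompact E, c ≤ ‖y - x‖ ^ p * u y := by
  set m := liminf (fun y => ‖y‖ ^ p * u y) (cocompact E)
  have hm : ∀ᶠ y in cocompact E, m / 2 < ‖y‖ ^ p * u y :=
    eventually_lt_of_lt_liminf (half_lt_self hinf)
      (isBoundedUnder_of ⟨0, fun y => mul_nonneg (by positivity) (hnn y)⟩)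
  have hfar : ∀ᶠ y in cocompact E, 2 * ‖x‖ ≤ ‖y‖ :=
    tendsto_norm_cocompact_atTop.eventually_ge_atTop _
  refine ⟨m / 2 / 2 ^ p, by positivity, ?_⟩
  filter_upwards [hm, hfar] with y hmy hxy
  have hy : ‖y‖ ≤ 2 * ‖y - x‖ := by linarith [norm_le_norm_sub_add y x]
  rw [div_le_iff₀ (by positivity)]
  calc m / 2 ≤ ‖y‖ ^ p * u y := hmy.le
    _ ≤ (2 * ‖y - x‖) ^ p * u y := by gcongr; exact hnn y
    _ = ‖y - x‖ ^ p * u y * 2 ^ p := by ring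

theorem exists_pos_le_norm_sub_pow_mul {E : Type*} [NormedAddCommGroup E] [ProperSpace E]
    {u : E → ℝ} {p : ℕ} (hu : Continuous u) (hpos : ∀ y, 0 < u y)
    (hinf : 0 < liminf (fun y => ‖y‖ ^ p * u y) (cocompact E)) (x : E) {r : ℝ} (hr : 0 < r) :
    ∃ c > 0, ∀ y, r ≤ ‖y - x‖ → c ≤ ‖y - x‖ ^ p * u y := by
  obtain ⟨c, hc, hev⟩ := exists_pos_eventually_le_norm_sub_pow_mul (fun y => (hpos y).le) hinf x
  exact (isClosed_le continuous_const (continuous_id.sub continuous_const).norm)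
    |>.exists_pos_le_of_eventually_cocompact (by fun_prop)
      (fun y hy => mul_pos (pow_pos (hr.trans_le hy) p) (hpos y)) hc hev

variable {E : Type*} [NormedAddCommGroup E] [NormedSpace ℝ E]

theorem exists_monotoneOn_pow_mul_sq_comp_ray {u : E → ℝ} {x : E} {p : ℕ}
    (hu : ContDiff ℝ 1 u) (hx : 0 < u x) (hp : 1 ≤ p) :
    ∃ r₀ > 0, ∀ θ : E, ‖θ‖ = 1 →
      MonotoneOn (fun r : ℝ => r ^ p * u (x + r • θ) ^ 2) (Icc 0 r₀) := by
  set K := ‖fderiv ℝ u x‖ + 1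
  have hK : 0 < K := by positivity
  have hnear : ∀ᶠ z in 𝓝 x, u x / 2 < u z ∧ ‖fderiv ℝ u z‖ < K :=
    (continuousAt_const.eventually_lt hu.continuous.continuousAt (half_lt_self hx)).and
      ((hu.continuous_fderiv one_ne_zero).norm.continuousAt.eventually_lt continuousAt_const
        (lt_add_one _))
  obtain ⟨δ, hδ, hδnear⟩ := Metric.eventually_nhds_iff.mp hnear
  -- for `r ≤ u x / (4 K)`, `2 r |∂_θ u| ≤ u x / 2 < u ≤ p u` along the ray
  refine ⟨min (δ / 2) (u x / (4 * K)), by positivity, fun θ hθ => ?_⟩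
  have hray : ∀ r, HasDerivAt (fun r : ℝ => u (x + r • θ)) (fderiv ℝ u (x + r • θ) θ) r :=
    fun r => (hu.differentiable one_ne_zero _).hasFDerivAt.comp_hasDerivAt r
      (by simpa using ((hasDerivAt_id r).smul_const θ).const_add x)
  refine monotoneOn_pow_mul_sq (fun r _ => hray r) (fun r hr => ?_) fun r hr => ?_
  all_goals
    have hrδ : r < δ := hr.2.trans_le ((min_le_left _ _).trans (half_le_self hδ.le))
    obtain ⟨hu_z, hDu_z⟩ := hδnear (y := x + r • θ) (by
      simpa [dist_eq_norm, norm_smul, hθ, abs_of_pos hr.1] using hrδ)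
  · linarith
  · have hDu_θ : -K ≤ fderiv ℝ u (x + r • θ) θ := by
      refine neg_le_of_abs_le ?_
      calc |fderiv ℝ u (x + r • θ) θ| ≤ ‖fderiv ℝ u (x + r • θ)‖ * ‖θ‖ :=
            (fderiv ℝ u (x + r • θ)).le_opNorm θ
        _ ≤ K := by rw [hθ, mul_one]; exact hDu_z.le
    have hrK : r * K ≤ u x / 4 := by
      have := hr.2.le.trans (min_le_right _ _)
      rw [le_div_iff₀ (by positivity)] at this
      linarith
    have hpu : u (x + r • θ) ≤ p * u (x + r • θ) :=
      le_mul_of_one_le_left (by linarith) (by exact_mod_cast hp)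
    nlinarith [mul_le_mul_of_nonneg_left hDu_θ hr.1.le]

noncomputable def kelvinTransform (p : ℕ) (u : E → ℝ) (x : E) (l : ℝ) (y : E) : ℝ :=
  (l / ‖y - x‖) ^ p * u (x + (l ^ 2 / ‖y - x‖ ^ 2) • (y - x))

theorem kelvinTransform_le_of_monotoneOn {u : E → ℝ} {x y : E} {p : ℕ} {r₀ l : ℝ}
    (hmono : ∀ θ : E, ‖θ‖ = 1 → MonotoneOn (fun r : ℝ => r ^ p * u (x + r • θ) ^ 2) (Icc 0 r₀))
    (hl : 0 < l) (hly : l ≤ ‖y - x‖) (hyr : ‖y - x‖ ≤ r₀) (huy : 0 ≤ u y) :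
    kelvinTransform p u x l y ≤ u y := by
  set d := ‖y - x‖
  have hd : 0 < d := hl.trans_le hly
  set θ := d⁻¹ • (y - x)
  have hθ : ‖θ‖ = 1 := by simp [θ, norm_smul, d, hd.ne']
  have hs : l ^ 2 / d ≤ d := by rw [div_le_iff₀ hd]; nlinarith
  have hray := hmono θ hθ ⟨by positivity, hs.trans hyr⟩ ⟨hd.le, hyr⟩ hs
  have hxs : x + (l ^ 2 / d) • θ = x + (l ^ 2 / d ^ 2) • (y - x) := by
    rw [smul_smul]; congr 2; field_simp
  have hxd : x + d • θ = y := by rw [smul_smul, mul_inv_cancel₀ hd.ne', one_smul, add_sub_cancel]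
  simp only [hxs, hxd] at hray
  refine le_of_abs_le (abs_le_of_sq_le_sq ?_ huy)
  set A := u (x + (l ^ 2 / d ^ 2) • (y - x))
  calc kelvinTransform p u x l y ^ 2 = ((l / d) ^ p * A) ^ 2 := rfl
    _ = ((l / d) ^ 2) ^ p * A ^ 2 := by ring
    _ = (l ^ 2 / d) ^ p * A ^ 2 / d ^ p := by
        rw [div_pow l, sq d, ← div_div, div_pow]; ring
    _ ≤ d ^ p * u y ^ 2 / d ^ p := by gcongr
    _ = u y ^ 2 := by field_simp

theorem exists_kelvinTransform_le_of_le_norm_sub [ProperSpace E] {u : E → ℝ} {p : ℕ}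
    (hu : Continuous u) (hpos : ∀ y, 0 < u y) (hp : 1 ≤ p)
    (hinf : 0 < liminf (fun y => ‖y‖ ^ p * u y) (cocompact E)) (x : E) {r₀ : ℝ} (hr₀ : 0 < r₀) :
    ∃ l₀ > 0, ∀ l, 0 < l → l < l₀ → ∀ y, l ≤ ‖y - x‖ → r₀ ≤ ‖y - x‖ →
      kelvinTransform p u x l y ≤ u y := by
  obtain ⟨c, hc, hcy⟩ := exists_pos_le_norm_sub_pow_mul hu hpos hinf x hr₀
  obtain ⟨z, -, hz⟩ := (isCompact_closedBall x 1).exists_isMaxOn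
    (nonempty_closedBall.mpr zero_le_one) hu.continuousOn
  have hM : 0 < u z := hpos z
  refine ⟨min 1 (c / u z), lt_min one_pos (div_pos hc hM), fun l hl hl₀ y hly hyr => ?_⟩
  set d := ‖y - x‖
  have hd : 0 < d := hl.trans_le hly
  have ha : x + (l ^ 2 / d ^ 2) • (y - x) ∈ closedBall x 1 := by
    have : l ^ 2 / d ≤ l := by rw [div_le_iff₀ hd]; nlinarith
    rw [mem_closedBall, dist_eq_norm, add_sub_cancel_left, norm_smul, Real.norm_of_nonneg
      (by positivity)]
    calc l ^ 2 / d ^ 2 * d = l ^ 2 / d := by field_simp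
      _ ≤ 1 := this.trans (hl₀.le.trans (min_le_left _ _))
  have hlM : l ^ p * u z ≤ c := calc
    l ^ p * u z ≤ l * u z := by
      gcongr; exact pow_le_of_le_one hl.le (hl₀.le.trans (min_le_left _ _)) (by omega)
    _ ≤ c := by
      rw [← le_div_iff₀ hM]; exact hl₀.le.trans (min_le_right _ _)
  calc kelvinTransform p u x l y ≤ (l / d) ^ p * u z := by
        unfold kelvinTransform; gcongr; exact hz ha
    _ = l ^ p * u z / d ^ p := by rw [div_pow]; ring
    _ ≤ c / d ^ p := by gcongr
    _ ≤ u y := by rw [div_le_iff₀ (by positivity)]; linarith [hcy y hyr]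

/-- If `u > 0` is `C¹` on `ℝⁿ` (`n ≥ 3`) and `liminf_{|y|→∞} |y|^{n-2} u(y) > 0`,
then the moving sphere method can be started at every center: for each `x` there
is `λ₀ > 0` such that `u_{x,λ} ≤ u` outside `B_λ(x)` for all `0 < λ < λ₀`. -/
theorem stmt4 {n : ℕ} (hn : 3 ≤ n) (u : EuclideanSpace ℝ (Fin n) → ℝ)
    (hu : ContDiff ℝ 1 u) (hpos : ∀ x, 0 < u x)
    (hinf : 0 < liminf (fun y : EuclideanSpace ℝ (Fin n) => ‖y‖ ^ (n - 2) * u y)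
      (cocompact (EuclideanSpace ℝ (Fin n)))) :
    ∀ x : EuclideanSpace ℝ (Fin n), ∃ l₀ > (0 : ℝ), ∀ l : ℝ, 0 < l → l < l₀ →
      ∀ y : EuclideanSpace ℝ (Fin n), l ≤ ‖y - x‖ →
        (l / ‖y - x‖) ^ (n - 2) * u (x + (l ^ 2 / ‖y - x‖ ^ 2) • (y - x)) ≤ u y := by
  intro x
  have hp : 1 ≤ n - 2 := by omega
  obtain ⟨r₀, hr₀, hmono⟩ := exists_monotoneOn_pow_mul_sq_comp_ray hu (hpos x) hp
  obtain ⟨l₀, hl₀, hfar⟩ :=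
    exists_kelvinTransform_le_of_le_norm_sub hu.continuous hpos hp hinf x hr₀
  refine ⟨l₀, hl₀, fun l hl hll₀ y hly => ?_⟩
  rcases le_total ‖y - x‖ r₀ with hnear | hr₀y
  · exact kelvinTransform_le_of_monotoneOn hmono hl hly hnear (hpos y).le
  · exact hfar l hl hll₀ y hly hr₀y
end

section
/- Let n ≥ 3, a, b > 0, x̄ ∈ ℝⁿ, and define u(x) = (a / (1 + b²|x−x̄|²))^{(n−2)/2}. Then the conformal Schouten-type tensor A^u := −(2/(n−2)) u^{−(n+2)/(n−2)} ∇²u + (2n/(n−2)²) u^{−2n/(n−2)} ∇u ⊗ ∇u − (2/(n−2)²) u^{−2n/(n−2)} |∇u|² I is constant on ℝⁿ and equals 2b²a^{−2} I. -/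
/-!
With `w = 1 + b²|x - x̄|²`, `y = x - x̄` and `m = (n - 2)/2` the bubble is `u = a^m w^{-m}`, so
differentiating `c · w^p` twice gives `∇u = -2b²m (u/w) y` and
`∇²u = 4b⁴m(m+1) (u/w²) y ⊗ y - 2b²m (u/w) I`, while the conformal powers of `u` are
`u^{-(n+2)/(n-2)} = w²/(a²u)` and `u^{-2n/(n-2)} = w²/(a²u²)`. The `y ⊗ y` terms then cancel and
the multiples of `I` add up to `2b²a⁻²(w - b²|y|²) = 2b²a⁻²`.
-/

open Filter Metric Matrix

/-- Gradient of `u` as a vector of partial derivatives. -/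
noncomputable def gradv {n : ℕ} (u : EuclideanSpace ℝ (Fin n) → ℝ)
    (x : EuclideanSpace ℝ (Fin n)) : Fin n → ℝ :=
  fun i => fderiv ℝ u x (EuclideanSpace.single i 1)

/-- Hessian matrix of `u`. -/
noncomputable def hess {n : ℕ} (u : EuclideanSpace ℝ (Fin n) → ℝ)
    (x : EuclideanSpace ℝ (Fin n)) : Matrix (Fin n) (Fin n) ℝ :=
  Matrix.of fun i j =>
    fderiv ℝ (fun z => fderiv ℝ u z (EuclideanSpace.single j 1)) x
      (EuclideanSpace.single i 1)

/-- The conformal Schouten-type tensor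
`A^u = -(2/(n-2)) u^{-(n+2)/(n-2)} ∇²u + (2n/(n-2)²) u^{-2n/(n-2)} ∇u⊗∇u
 - (2/(n-2)²) u^{-2n/(n-2)} |∇u|² I`. -/
noncomputable def Amat {n : ℕ} (u : EuclideanSpace ℝ (Fin n) → ℝ)
    (x : EuclideanSpace ℝ (Fin n)) : Matrix (Fin n) (Fin n) ℝ :=
  (-(2 / ((n : ℝ) - 2)) * u x ^ (-(((n : ℝ) + 2) / ((n : ℝ) - 2)))) • hess u x
    + ((2 * (n : ℝ) / ((n : ℝ) - 2) ^ 2) * u x ^ (-(2 * (n : ℝ) / ((n : ℝ) - 2)))) •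
        Matrix.vecMulVec (gradv u x) (gradv u x)
    - ((2 / ((n : ℝ) - 2) ^ 2) * u x ^ (-(2 * (n : ℝ) / ((n : ℝ) - 2))) *
        (∑ i, gradv u x i ^ 2)) • (1 : Matrix (Fin n) (Fin n) ℝ)

noncomputable def bubbleDenom {E : Type*} [NormedAddCommGroup E] (b : ℝ) (xbar z : E) : ℝ :=
  1 + b ^ 2 * ‖z - xbar‖ ^ 2

lemma bubbleDenom_pos {E : Type*} [NormedAddCommGroup E] (b : ℝ) (xbar z : E) :
    0 < bubbleDenom b xbar z := by
  unfold bubbleDenom; positivity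

section InnerProductSpace

variable {E : Type*} [NormedAddCommGroup E] [InnerProductSpace ℝ E]

lemma hasFDerivAt_bubbleDenom (b : ℝ) (xbar x : E) :
    HasFDerivAt (bubbleDenom b xbar) ((2 * b ^ 2) • innerSL ℝ (x - xbar)) x := by
  have h := (((hasFDerivAt_id x).sub_const xbar).norm_sq.const_mul (b ^ 2)).const_add 1
  refine h.congr_fderiv ?_
  ext v
  simp only [id_eq, map_sub, ContinuousLinearMap.comp_id, _root_.smul_apply, _root_.sub_apply,
    coe_innerSL_apply, nsmul_eq_mul, Nat.cast_ofNat, smul_eq_mul]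
  ring

lemma hasFDerivAt_const_mul_bubbleDenom_rpow (b c p : ℝ) (xbar x : E) :
    HasFDerivAt (fun z => c * bubbleDenom b xbar z ^ p)
      ((2 * b ^ 2 * p * c * bubbleDenom b xbar x ^ (p - 1)) • innerSL ℝ (x - xbar)) x := by
  have h := ((hasFDerivAt_bubbleDenom b xbar x).rpow_const (p := p)
    (Or.inl (bubbleDenom_pos b xbar x).ne')).const_mul c
  refine h.congr_fderiv ?_
  rw [smul_smul, smul_smul]
  congr 1
  ring

end InnerProductSpace

section EuclideanSpace

variable {n : ℕ}

lemma fderiv_const_mul_bubbleDenom_rpow_single (b c p : ℝ) (xbar x : EuclideanSpace ℝ (Fin n))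
    (i : Fin n) :
    fderiv ℝ (fun z => c * bubbleDenom b xbar z ^ p) x (EuclideanSpace.single i 1)
      = 2 * b ^ 2 * p * c * bubbleDenom b xbar x ^ (p - 1) * (x i - xbar i) := by
  rw [(hasFDerivAt_const_mul_bubbleDenom_rpow b c p xbar x).fderiv]
  simp [EuclideanSpace.inner_single_right]

lemma gradv_const_mul_bubbleDenom_rpow (b c p : ℝ) (xbar x : EuclideanSpace ℝ (Fin n))
    (i : Fin n) :
    gradv (fun z => c * bubbleDenom b xbar z ^ p) x i
      = 2 * b ^ 2 * p * (c * bubbleDenom b xbar x ^ p) / bubbleDenom b xbar x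
          * (x i - xbar i) := by
  rw [gradv, fderiv_const_mul_bubbleDenom_rpow_single,
    Real.rpow_sub_one (bubbleDenom_pos b xbar x).ne']
  ring

lemma hess_const_mul_bubbleDenom_rpow (b c p : ℝ) (xbar x : EuclideanSpace ℝ (Fin n))
    (i j : Fin n) :
    hess (fun z => c * bubbleDenom b xbar z ^ p) x i j
      = 4 * b ^ 4 * p * (p - 1) * (c * bubbleDenom b xbar x ^ p) / bubbleDenom b xbar x ^ 2
          * (x i - xbar i) * (x j - xbar j)
        + 2 * b ^ 2 * p * (c * bubbleDenom b xbar x ^ p) / bubbleDenom b xbar x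
          * (if i = j then 1 else 0) := by
  have hw := bubbleDenom_pos b xbar x
  have hcoord : HasFDerivAt (fun z : EuclideanSpace ℝ (Fin n) => z j - xbar j)
      (EuclideanSpace.proj (𝕜 := ℝ) j) x :=
    ((EuclideanSpace.proj (𝕜 := ℝ) j).hasFDerivAt (x := x)).sub_const (xbar j)
  have hpartial := (hasFDerivAt_const_mul_bubbleDenom_rpow b (2 * b ^ 2 * p * c) (p - 1)
    xbar x).mul hcoord
  simp only [Pi.mul_def] at hpartial
  have hfun : (fun z => fderiv ℝ (fun z => c * bubbleDenom b xbar z ^ p) z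
      (EuclideanSpace.single j 1))
      = fun z => 2 * b ^ 2 * p * c * bubbleDenom b xbar z ^ (p - 1) * (z j - xbar j) :=
    funext fun z => fderiv_const_mul_bubbleDenom_rpow_single b c p xbar z j
  rw [hess, Matrix.of_apply, hfun, hpartial.fderiv]
  simp only [_root_.add_apply, _root_.smul_apply, smul_eq_mul, PiLp.proj_apply,
    PiLp.single_apply, coe_innerSL_apply, EuclideanSpace.inner_single_right, eq_comm (a := j),
    PiLp.sub_apply, conj_trivial, Real.rpow_sub hw, Real.rpow_one]
  split_ifs <;> field_simp <;> ring

end EuclideanSpace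

section ConformalExponents

variable {N q : ℝ}

lemma rpow_rpow_neg_add_two_div_sub_two (hN : N ≠ 2) (hq : 0 < q) :
    (q ^ ((N - 2) / 2)) ^ (-((N + 2) / (N - 2))) = (q ^ ((N - 2) / 2) * q ^ 2)⁻¹ := by
  have hN' : N - 2 ≠ 0 := sub_ne_zero.mpr hN
  rw [← Real.rpow_mul hq.le, show (N - 2) / 2 * -((N + 2) / (N - 2)) = -((N - 2) / 2 + 2) by
    field_simp; ring, Real.rpow_neg hq.le, Real.rpow_add hq, Real.rpow_two]

lemma rpow_rpow_neg_two_mul_div_sub_two (hN : N ≠ 2) (hq : 0 < q) :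
    (q ^ ((N - 2) / 2)) ^ (-(2 * N / (N - 2))) = ((q ^ ((N - 2) / 2)) ^ 2 * q ^ 2)⁻¹ := by
  have hN' : N - 2 ≠ 0 := sub_ne_zero.mpr hN
  rw [← Real.rpow_mul hq.le, show (N - 2) / 2 * -(2 * N / (N - 2))
      = -((N - 2) / 2 + (N - 2) / 2 + 2) by field_simp; ring,
    Real.rpow_neg hq.le, Real.rpow_add hq, Real.rpow_add hq, Real.rpow_two]
  ring

end ConformalExponents

noncomputable def bubble {n : ℕ} (a b m : ℝ) (xbar z : EuclideanSpace ℝ (Fin n)) : ℝ :=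
  (a / bubbleDenom b xbar z) ^ m

section Bubble

variable {n : ℕ} {a : ℝ} (b m : ℝ) (xbar x : EuclideanSpace ℝ (Fin n))

lemma bubble_pos (ha : 0 < a) : 0 < bubble a b m xbar x :=
  Real.rpow_pos_of_pos (div_pos ha (bubbleDenom_pos b xbar x)) m

lemma bubble_eq_const_mul_rpow (ha : 0 ≤ a) :
    bubble a b m xbar = fun z => a ^ m * bubbleDenom b xbar z ^ (-m) := funext fun z => by
  have hw := bubbleDenom_pos b xbar z
  rw [bubble, Real.div_rpow ha hw.le, Real.rpow_neg hw.le, div_eq_mul_inv]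

lemma gradv_bubble (ha : 0 ≤ a) (i : Fin n) :
    gradv (bubble a b m xbar) x i
      = -(2 * b ^ 2 * m * bubble a b m xbar x / bubbleDenom b xbar x) * (x i - xbar i) := by
  rw [bubble_eq_const_mul_rpow b m xbar ha, gradv_const_mul_bubbleDenom_rpow]
  ring

lemma hess_bubble (ha : 0 ≤ a) (i j : Fin n) :
    hess (bubble a b m xbar) x i j
      = 4 * b ^ 4 * m * (m + 1) * bubble a b m xbar x / bubbleDenom b xbar x ^ 2
          * (x i - xbar i) * (x j - xbar j)
        - 2 * b ^ 2 * m * bubble a b m xbar x / bubbleDenom b xbar x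
          * (if i = j then 1 else 0) := by
  rw [bubble_eq_const_mul_rpow b m xbar ha, hess_const_mul_bubbleDenom_rpow]
  ring

lemma sum_gradv_bubble_sq (ha : 0 ≤ a) :
    ∑ k, gradv (bubble a b m xbar) x k ^ 2
      = (2 * b ^ 2 * m * bubble a b m xbar x / bubbleDenom b xbar x) ^ 2 * ‖x - xbar‖ ^ 2 := by
  simp only [gradv_bubble b m xbar x ha, mul_pow, neg_sq, ← Finset.mul_sum,
    EuclideanSpace.norm_sq_eq, PiLp.sub_apply, Real.norm_eq_abs, sq_abs]

end Bubble

theorem stmt6_general {n : ℕ} (hn : 3 ≤ n) (a b : ℝ) (ha : 0 < a)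
    (xbar : EuclideanSpace ℝ (Fin n))
    (u : EuclideanSpace ℝ (Fin n) → ℝ)
    (hu : ∀ x, u x = (a / (1 + b ^ 2 * ‖x - xbar‖ ^ 2)) ^ (((n : ℝ) - 2) / 2)) :
    ∀ x, Amat u x = (2 * b ^ 2 / a ^ 2) • (1 : Matrix (Fin n) (Fin n) ℝ) := by
  obtain rfl : u = bubble a b (((n : ℝ) - 2) / 2) xbar := funext hu
  have hn2 : (n : ℝ) ≠ 2 := by norm_cast; omega
  intro x
  have hw : bubbleDenom b xbar x ≠ 0 := (bubbleDenom_pos b xbar x).ne'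
  have hq : 0 < a / bubbleDenom b xbar x := div_pos ha (bubbleDenom_pos b xbar x)
  have hU : (a / bubbleDenom b xbar x) ^ (((n : ℝ) - 2) / 2) ≠ 0 :=
    (bubble_pos b _ xbar x ha).ne'
  ext i j
  rw [Amat, sum_gradv_bubble_sq b _ xbar x ha.le]
  simp only [Matrix.add_apply, Matrix.sub_apply, Matrix.smul_apply, vecMulVec_apply, one_apply,
    smul_eq_mul, gradv_bubble b _ xbar x ha.le, hess_bubble b _ xbar x ha.le, bubble]
  rw [rpow_rpow_neg_add_two_div_sub_two hn2 hq, rpow_rpow_neg_two_mul_div_sub_two hn2 hq]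
  split_ifs <;> field_simp <;> unfold bubbleDenom <;> ring

/-- For the standard bubble `u(x) = (a/(1+b²|x-x̄|²))^{(n-2)/2}`, the tensor `A^u`
is constant, equal to `2b²a⁻² I`. -/
theorem stmt6 {n : ℕ} (hn : 3 ≤ n) (a b : ℝ) (ha : 0 < a) (hb : 0 < b)
    (xbar : EuclideanSpace ℝ (Fin n))
    (u : EuclideanSpace ℝ (Fin n) → ℝ)
    (hu : ∀ x, u x = (a / (1 + b ^ 2 * ‖x - xbar‖ ^ 2)) ^ (((n : ℝ) - 2) / 2)) :
    ∀ x, Amat u x = (2 * b ^ 2 / a ^ 2) • (1 : Matrix (Fin n) (Fin n) ℝ) :=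
  stmt6_general hn a b ha xbar u hu
end

section
/- Let n ≥ 3, α > 0, and suppose u : ℝⁿ → ℝ is positive and C¹ such that the vector field V(x) := (n−2) α x + α^{n/(n−2)} u(x)^{n/(2−n)} ∇u(x) is constant on ℝⁿ. Then there exist x̄ ∈ ℝⁿ and d > 0 such that u(x) = (α^{2/(n−2)} / (d + |x−x̄|²))^{(n−2)/2} for all x ∈ ℝⁿ. -/
/-!
Since `∇(u ^ (2/(2-n))) = (2/(2-n)) u ^ (n/(2-n)) ∇u`, constancy of `V` says that `u ^ (2/(2-n))`
has the same gradient as `α ^ (-2/(n-2)) ‖x - x̄‖²`, where `x̄ = V / ((n-2) α)`. Hence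
`u ^ (2/(2-n)) = α ^ (-2/(n-2)) (d + ‖x - x̄‖²)` with `d = α ^ (2/(n-2)) u(x̄) ^ (2/(2-n)) > 0`,
and solving for `u` gives the bubble.
-/

open InnerProductSpace

variable {E : Type*} [NormedAddCommGroup E] [InnerProductSpace ℝ E] [CompleteSpace E]

theorem HasGradientAt.rpow_const {f : E → ℝ} {f' x : E} {p : ℝ} (hf : HasGradientAt f f' x)
    (h : f x ≠ 0 ∨ 1 ≤ p) : HasGradientAt (fun y => f y ^ p) ((p * f x ^ (p - 1)) • f') x := by
  rw [hasGradientAt_iff_hasFDerivAt, map_smul]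
  exact hf.hasFDerivAt.rpow_const h

theorem hasGradientAt_norm_sub_sq (x₀ x : E) :
    HasGradientAt (fun y => ‖y - x₀‖ ^ 2) ((2 : ℝ) • (x - x₀)) x := by
  refine (((hasFDerivAt_id x).sub_const x₀).norm_sq).congr_fderiv ?_
  ext v
  simp

theorem eq_add_mul_norm_sub_sq_of_hasGradientAt {f : E → ℝ} {β : ℝ} {x₀ : E}
    (hf : ∀ x, HasGradientAt f ((2 * β) • (x - x₀)) x) (x : E) :
    f x = f x₀ + β * ‖x - x₀‖ ^ 2 := by
  have hq : ∀ x, HasFDerivAt (fun y => f x₀ + β * ‖y - x₀‖ ^ 2)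
      (toDual ℝ E ((2 * β) • (x - x₀))) x := fun x => by
    rw [mul_comm, ← smul_smul, map_smul]
    exact ((hasGradientAt_norm_sub_sq x₀ x).hasFDerivAt.const_mul β).const_add (f x₀)
  refine congrFun (eq_of_fderiv_eq (𝕜 := ℝ) (fun x => (hf x).differentiableAt)
    (fun x => (hq x).differentiableAt) (fun x => ?_) x₀ (by simp)) x
  rw [(hf x).hasFDerivAt.fderiv, (hq x).fderiv]

noncomputable def bubbleField (n α : ℝ) (u : E → ℝ) (x : E) : E :=
  ((n - 2) * α) • x + (α ^ (n / (n - 2)) * u x ^ (n / (2 - n))) • gradient u x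

theorem hasGradientAt_rpow_of_bubbleField_eq {n α : ℝ} (hn : n ≠ 2) (hα : 0 < α) {u : E → ℝ}
    (hu : Differentiable ℝ u) (hu₀ : ∀ x, u x ≠ 0) {c : E} (hV : ∀ x, bubbleField n α u x = c)
    (x : E) :
    HasGradientAt (fun y => u y ^ (2 / (2 - n)))
      ((2 * (α ^ (2 / (n - 2)))⁻¹) • (x - ((n - 2) * α)⁻¹ • c)) x := by
  have hn₁ : n - 2 ≠ 0 := sub_ne_zero.mpr hn
  have hn₂ : 2 - n ≠ 0 := sub_ne_zero.mpr hn.symm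
  have hexp : 2 / (2 - n) - 1 = n / (2 - n) := by field_simp; ring
  have hpow : α ^ (n / (n - 2)) = α * α ^ (2 / (n - 2)) := by
    rw [show n / (n - 2) = 1 + 2 / (n - 2) by field_simp; ring, Real.rpow_add hα, Real.rpow_one]
  have hgrad : (2 / (2 - n) * u x ^ (2 / (2 - n) - 1)) • gradient u x
      = (2 * (α ^ (2 / (n - 2)))⁻¹) • (x - ((n - 2) * α)⁻¹ • c) := by
    rw [← hV x, bubbleField, hexp, smul_add, smul_smul, inv_mul_cancel₀ (mul_ne_zero hn₁ hα.ne'),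
      one_smul, sub_add_cancel_left, smul_neg, smul_smul, smul_smul, ← neg_smul, hpow]
    congr 1
    field_simp
    ring
  rw [← hgrad]
  exact (hu x).hasGradientAt.rpow_const (Or.inl (hu₀ x))

theorem eq_div_rpow_of_rpow_eq {n A B t : ℝ} (hn : n ≠ 2) (ht : 0 ≤ t)
    (h : t ^ (2 / (2 - n)) = A⁻¹ * B) : t = (A / B) ^ ((n - 2) / 2) := by
  have hn₂ : 2 - n ≠ 0 := sub_ne_zero.mpr hn.symm
  have hX : 0 ≤ A⁻¹ * B := h ▸ Real.rpow_nonneg ht _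
  have hinv : (2 / (2 - n))⁻¹ = -((n - 2) / 2) := by field_simp; ring
  calc t = (t ^ (2 / (2 - n))) ^ (2 / (2 - n))⁻¹ :=
        (Real.rpow_rpow_inv ht (by simpa using hn₂)).symm
    _ = (A / B) ^ ((n - 2) / 2) := by
      rw [h, hinv, Real.rpow_neg hX, ← Real.inv_rpow hX, mul_inv, inv_inv, ← div_eq_mul_inv]

/-- If `u > 0` is `C¹` on `ℝⁿ` and the vector field
`V(x) = (n-2) α x + α^{n/(n-2)} u(x)^{n/(2-n)} ∇u(x)` is constant, then `u` is a
standard bubble: `u(x) = (α^{2/(n-2)}/(d+|x-x̄|²))^{(n-2)/2}` with `d > 0`. -/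
theorem stmt7 {n : ℕ} (hn : 3 ≤ n) (α : ℝ) (hα : 0 < α)
    (u : EuclideanSpace ℝ (Fin n) → ℝ)
    (hu : ContDiff ℝ 1 u) (hpos : ∀ x, 0 < u x)
    (hV : ∀ x y : EuclideanSpace ℝ (Fin n),
      (((n : ℝ) - 2) * α) • x +
        (α ^ ((n : ℝ) / ((n : ℝ) - 2)) * u x ^ ((n : ℝ) / (2 - (n : ℝ)))) • gradient u x =
      (((n : ℝ) - 2) * α) • y +
        (α ^ ((n : ℝ) / ((n : ℝ) - 2)) * u y ^ ((n : ℝ) / (2 - (n : ℝ)))) • gradient u y) :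
    ∃ (xbar : EuclideanSpace ℝ (Fin n)) (d : ℝ), 0 < d ∧
      ∀ x, u x = (α ^ (2 / ((n : ℝ) - 2)) / (d + ‖x - xbar‖ ^ 2)) ^ (((n : ℝ) - 2) / 2) := by
  have hn₂ : (n : ℝ) ≠ 2 := by exact_mod_cast (by omega : n ≠ 2)
  set xbar := (((n : ℝ) - 2) * α)⁻¹ • bubbleField n α u 0
  have hquadratic : ∀ x, u x ^ (2 / (2 - (n : ℝ))) =
      u xbar ^ (2 / (2 - (n : ℝ))) + (α ^ (2 / ((n : ℝ) - 2)))⁻¹ * ‖x - xbar‖ ^ 2 :=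
    eq_add_mul_norm_sub_sq_of_hasGradientAt <| hasGradientAt_rpow_of_bubbleField_eq hn₂ hα
      (hu.differentiable one_ne_zero) (fun x => (hpos x).ne') (fun x => hV x 0)
  refine ⟨xbar, α ^ (2 / ((n : ℝ) - 2)) * u xbar ^ (2 / (2 - (n : ℝ))),
    mul_pos (by positivity) (Real.rpow_pos_of_pos (hpos xbar) _), fun x => ?_⟩
  refine eq_div_rpow_of_rpow_eq hn₂ (hpos x).le ?_
  rw [hquadratic x, mul_add, inv_mul_cancel_left₀ (by positivity)]
end

section
/- Let n ≥ 3, u : ℝⁿ → ℝ be C², x ∈ ℝⁿ, and λ > 0. Define w(y) = |y|^{2−n} u_{x,λ}(y/|y|²), where u_{x,λ}(z) = (λ/|z−x|)^{n−2} u(x + λ²(z−x)/|z−x|²). Then w extends to be C¹ near y = 0 with w(0) = λ^{n−2} u(x) and ∇w(0) = (n−2) λ^{n−2} u(x) x + λⁿ ∇u(x). -/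
/-!
With `z = y / ‖y‖²` one has `‖z - x‖² = D(y) / ‖y‖²` for the polynomial
`D(y) = 1 - 2⟪x, y⟫ + ‖x‖²‖y‖²`, and `x + λ²(z - x)/‖z - x‖² = x + λ²(y - ‖y‖²x)/D(y)`.
Substituting, the powers of `‖y‖` cancel and
`w(y) = λⁿ⁻² D(y)^{-(n-2)/2} u(x + λ²(y - ‖y‖²x)/D(y))`,
an expression that makes sense and is `C¹` wherever `D ≠ 0`, in particular near `0`, where `D = 1`.
Its gradient at `0` follows from the chain rule, since `D'(0) = -2⟪x, ·⟫` and the inner map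
has derivative `λ² • id` at `0`.
-/

open Metric RealInnerProductSpace InnerProductSpace

noncomputable section

namespace Kelvin

variable {E : Type*} [NormedAddCommGroup E] [InnerProductSpace ℝ E]

def denom (x y : E) : ℝ := 1 - 2 * ⟪x, y⟫ + ‖x‖ ^ 2 * ‖y‖ ^ 2

def map (x : E) (l : ℝ) (y : E) : E := x + (l ^ 2 * (denom x y)⁻¹) • (y - ‖y‖ ^ 2 • x)

/-- The closed form of `‖y‖^{-m} u_{x,l}(y / ‖y‖²)`, where `m = n - 2` is the conformal weight. -/
def doubleTransform (u : E → ℝ) (x : E) (l : ℝ) (m : ℕ) (y : E) : ℝ :=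
  l ^ m * (denom x y ^ (-(m : ℝ) / 2) * u (map x l y))

@[simp] theorem denom_zero (x : E) : denom x 0 = 1 := by simp [denom]

@[simp] theorem map_zero (x : E) (l : ℝ) : map x l 0 = x := by simp [map]

theorem doubleTransform_zero (u : E → ℝ) (x : E) (l : ℝ) (m : ℕ) :
    doubleTransform u x l m 0 = l ^ m * u x := by
  simp [doubleTransform]

theorem denom_pos_of_mem_ball {x y : E} (hy : y ∈ ball 0 (1 + ‖x‖)⁻¹) : 0 < denom x y := by
  rw [mem_ball_zero_iff, ← one_div, lt_div_iff₀ (by positivity)] at hy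
  have hxy : ‖x‖ * ‖y‖ < 1 := by nlinarith [norm_nonneg y]
  have := real_inner_le_norm x y
  unfold denom
  nlinarith [sq_nonneg (1 - ‖x‖ * ‖y‖)]

theorem norm_inversion_sub_sq {y : E} (x : E) (hy : y ≠ 0) :
    ‖(‖y‖ ^ 2)⁻¹ • y - x‖ ^ 2 = denom x y / ‖y‖ ^ 2 := by
  have hy' : ‖y‖ ≠ 0 := norm_ne_zero_iff.mpr hy
  rw [norm_sub_sq_real, norm_smul, real_inner_smul_left, real_inner_comm, denom,
    Real.norm_of_nonneg (by positivity)]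
  field_simp

theorem inversion_add_smul_eq_map {y : E} (x : E) (l : ℝ) (hy : y ≠ 0) :
    x + (l ^ 2 / ‖(‖y‖ ^ 2)⁻¹ • y - x‖ ^ 2) • ((‖y‖ ^ 2)⁻¹ • y - x) = map x l y := by
  have hy' : ‖y‖ ≠ 0 := norm_ne_zero_iff.mpr hy
  have hsub : (‖y‖ ^ 2)⁻¹ • y - x = (‖y‖ ^ 2)⁻¹ • (y - ‖y‖ ^ 2 • x) := by
    rw [smul_sub, smul_smul, inv_mul_cancel₀ (by positivity), one_smul]
  rw [norm_inversion_sub_sq x hy, hsub, smul_smul, map]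
  congr 2
  field_simp

theorem rpow_mul_div_norm_inversion_sub_pow {y : E} (x : E) (l : ℝ) (m : ℕ) (hy : y ≠ 0)
    (hD : 0 < denom x y) :
    ‖y‖ ^ (-(m : ℝ)) * (l / ‖(‖y‖ ^ 2)⁻¹ • y - x‖) ^ m =
      l ^ m * denom x y ^ (-(m : ℝ) / 2) := by
  have hy' : 0 < ‖y‖ := norm_pos_iff.mpr hy
  have hnorm : ‖(‖y‖ ^ 2)⁻¹ • y - x‖ = √(denom x y) / ‖y‖ := by
    rw [← Real.sqrt_sq (norm_nonneg _), norm_inversion_sub_sq x hy, Real.sqrt_div hD.le,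
      Real.sqrt_sq hy'.le]
  rw [hnorm, Real.rpow_neg hy'.le, Real.rpow_natCast, Real.sqrt_eq_rpow, neg_div,
    Real.rpow_neg hD.le, div_div_eq_mul_div, div_pow, mul_pow,
    ← Real.rpow_natCast (denom x y ^ _), ← Real.rpow_mul hD.le]
  field_simp

theorem contDiff_denom (x : E) : ContDiff ℝ ⊤ (denom x) :=
  (contDiff_const.sub (contDiff_const.mul (innerSL ℝ x).contDiff)).add
    (contDiff_const.mul (contDiff_norm_sq ℝ))

theorem contDiffAt_map {x y : E} (l : ℝ) (hD : denom x y ≠ 0) : ContDiffAt ℝ ⊤ (map x l) y :=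
  contDiffAt_const.add <|
    (contDiffAt_const.mul ((contDiff_denom x).contDiffAt.inv hD)).smul
      (contDiffAt_id.sub ((contDiff_norm_sq ℝ).contDiffAt.smul contDiffAt_const))

theorem contDiffAt_doubleTransform {u : E → ℝ} {k : WithTop ℕ∞} {x y : E} {l : ℝ} (m : ℕ)
    (hu : ContDiffAt ℝ k u (map x l y)) (hD : denom x y ≠ 0) :
    ContDiffAt ℝ k (doubleTransform u x l m) y :=
  contDiffAt_const.mul <|
    (((contDiff_denom x).contDiffAt.of_le le_top).rpow_const_of_ne hD).mul
      (hu.comp y ((contDiffAt_map l hD).of_le le_top))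

theorem hasFDerivAt_denom_zero (x : E) :
    HasFDerivAt (denom x) ((-2 : ℝ) • innerSL ℝ x) 0 := by
  have h := ((hasFDerivAt_const (1 : ℝ) (0 : E)).sub ((innerSL ℝ x).hasFDerivAt.const_mul 2)).add
    ((hasFDerivAt_id (0 : E)).norm_sq.const_mul (‖x‖ ^ 2))
  refine HasFDerivAt.congr_fderiv (f := denom x) h ?_
  ext v
  simp

theorem hasFDerivAt_map_zero (x : E) (l : ℝ) :
    HasFDerivAt (map x l) (l ^ 2 • ContinuousLinearMap.id ℝ E) 0 := by
  have hinv := (hasDerivAt_inv (by simp)).comp_hasFDerivAt 0 (hasFDerivAt_denom_zero x)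
  have h := (hasFDerivAt_const x (0 : E)).add ((hinv.const_mul (l ^ 2)).smul
    ((hasFDerivAt_id (0 : E)).sub ((hasFDerivAt_id (0 : E)).norm_sq.smul_const x)))
  refine HasFDerivAt.congr_fderiv (f := map x l) h ?_
  ext v
  simp

theorem hasGradientAt_doubleTransform_zero [CompleteSpace E] {u : E → ℝ} {x : E} (l : ℝ)
    (m : ℕ) (hu : DifferentiableAt ℝ u x) :
    HasGradientAt (doubleTransform u x l m)
      ((m * l ^ m * u x) • x + l ^ (m + 2) • gradient u x) 0 := by
  have hu' : HasFDerivAt u (toDual ℝ E (gradient u x)) (map x l 0) := by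
    rw [map_zero]
    exact hasGradientAt_iff_hasFDerivAt.mp hu.hasGradientAt
  have hpow := (hasFDerivAt_denom_zero x).rpow_const (p := -(m : ℝ) / 2) (Or.inl (by simp))
  have h := (hpow.mul (hu'.comp 0 (hasFDerivAt_map_zero x l))).const_mul (l ^ m)
  rw [hasGradientAt_iff_hasFDerivAt]
  refine HasFDerivAt.congr_fderiv (f := doubleTransform u x l m) h ?_
  ext v
  simp only [denom_zero, Real.one_rpow, toDual_gradient, ContinuousLinearMap.comp_smulₛₗ,
    Real.ringHom_apply, ContinuousLinearMap.comp_id, one_smul, Function.comp_apply, map_zero,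
    mul_one, neg_smul, smul_neg, smul_add, add_apply,
    smul_apply, smul_eq_mul, neg_apply,
    coe_innerSL_apply, map_add, map_smul, toDual_apply_apply]
  ring

end Kelvin

end

open Kelvin in
theorem stmt8_general {n : ℕ} (hn : 3 ≤ n) (u : EuclideanSpace ℝ (Fin n) → ℝ)
    (hu : ContDiff ℝ 2 u) (x : EuclideanSpace ℝ (Fin n)) (l : ℝ)
    -- `w y = ‖y‖^{2-n} u_{x,l}(y/‖y‖²)` where
    -- `u_{x,l}(z) = (l/‖z-x‖)^{n-2} u (x + (l²/‖z-x‖²)(z-x))`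
    (w : EuclideanSpace ℝ (Fin n) → ℝ)
    (hw : ∀ y : EuclideanSpace ℝ (Fin n), y ≠ 0 →
      w y = ‖y‖ ^ ((2 : ℝ) - (n : ℝ)) *
        ((l / ‖(‖y‖ ^ 2)⁻¹ • y - x‖) ^ (n - 2) *
          u (x + (l ^ 2 / ‖(‖y‖ ^ 2)⁻¹ • y - x‖ ^ 2) • ((‖y‖ ^ 2)⁻¹ • y - x)))) :
    ∃ ε > (0 : ℝ), ∃ W : EuclideanSpace ℝ (Fin n) → ℝ,
      ContDiffOn ℝ 1 W (ball (0 : EuclideanSpace ℝ (Fin n)) ε) ∧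
      (∀ y ∈ ball (0 : EuclideanSpace ℝ (Fin n)) ε \ {0}, W y = w y) ∧
      W 0 = l ^ (n - 2) * u x ∧
      gradient W 0 = (((n : ℝ) - 2) * l ^ (n - 2) * u x) • x + (l ^ n) • gradient u x := by
  obtain ⟨m, rfl⟩ : ∃ m, n = m + 2 := ⟨n - 2, by omega⟩
  have hm : ((m + 2 : ℕ) : ℝ) - 2 = m := by push_cast; ring
  have hm' : (2 : ℝ) - ((m + 2 : ℕ) : ℝ) = -m := by push_cast; ring
  refine ⟨(1 + ‖x‖)⁻¹, by positivity, doubleTransform u x l m, fun y hy => ?_,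
    fun y hy => ?_, by simpa using doubleTransform_zero u x l m, ?_⟩
  · exact (contDiffAt_doubleTransform m (hu.contDiffAt.of_le one_le_two)
      (denom_pos_of_mem_ball hy).ne').contDiffWithinAt
  · have hy0 : y ≠ 0 := hy.2
    rw [hw y hy0, hm', Nat.add_sub_cancel, ← mul_assoc,
      rpow_mul_div_norm_inversion_sub_pow x l m hy0 (denom_pos_of_mem_ball hy.1),
      inversion_add_smul_eq_map x l hy0, doubleTransform, mul_assoc]
  · simpa [hm] using
      (hasGradientAt_doubleTransform_zero l m (hu.differentiable two_ne_zero x)).gradient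

/-- The double Kelvin transform `w(y) = |y|^{2-n} u_{x,λ}(y/|y|²)` extends to a
`C¹` function near `y = 0`, with `w(0) = λ^{n-2} u(x)` and
`∇w(0) = (n-2) λ^{n-2} u(x) x + λⁿ ∇u(x)`. -/
theorem stmt8 {n : ℕ} (hn : 3 ≤ n) (u : EuclideanSpace ℝ (Fin n) → ℝ)
    (hu : ContDiff ℝ 2 u) (x : EuclideanSpace ℝ (Fin n)) (l : ℝ) (hl : 0 < l)
    -- `w y = ‖y‖^{2-n} u_{x,l}(y/‖y‖²)` where
    -- `u_{x,l}(z) = (l/‖z-x‖)^{n-2} u (x + (l²/‖z-x‖²)(z-x))`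
    (w : EuclideanSpace ℝ (Fin n) → ℝ)
    (hw : ∀ y : EuclideanSpace ℝ (Fin n), y ≠ 0 →
      w y = ‖y‖ ^ ((2 : ℝ) - (n : ℝ)) *
        ((l / ‖(‖y‖ ^ 2)⁻¹ • y - x‖) ^ (n - 2) *
          u (x + (l ^ 2 / ‖(‖y‖ ^ 2)⁻¹ • y - x‖ ^ 2) • ((‖y‖ ^ 2)⁻¹ • y - x)))) :
    ∃ ε > (0 : ℝ), ∃ W : EuclideanSpace ℝ (Fin n) → ℝ,
      ContDiffOn ℝ 1 W (ball (0 : EuclideanSpace ℝ (Fin n)) ε) ∧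
      (∀ y ∈ ball (0 : EuclideanSpace ℝ (Fin n)) ε \ {0}, W y = w y) ∧
      W 0 = l ^ (n - 2) * u x ∧
      gradient W 0 = (((n : ℝ) - 2) * l ^ (n - 2) * u x) • x + (l ^ n) • gradient u x :=
  stmt8_general hn u hu x l w hw
end
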